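/- arXiv:1212.3651 — 4 statements merged into one kernel-verified Lean document; each statement's English description precedes it below -/
import Mathlib

section
/- Let κ, κ̂ : ℝ → ℝ be continuously differentiable with κ(t) − κ̂(t) ≠ 0 for all t, set ρ(t) := 1/(κ(t) − κ̂(t)) and g(t) := ρ(t)²·(κ(t)·κ̂'(t) − κ'(t)·κ̂(t)). Let a ∈ ℝ with a ≠ 0, let θ : ℝ → ℝ be continuously differentiable, and let A, φ₀ ∈ ℝ. Define b₁(t) := a·κ̂(t)·ρ(t) + (A/a)·cos(θ(t) − φ₀) − a·∫₀ᵗ cos(θ(t) − θ(s))·g(s) ds and b₂(t) := −(A/a)·sin(θ(t) − φ₀) + a·∫₀ᵗ sin(θ(t) − θ(s))·g(s) ds. Then b₁ and b₂ are differentiable and satisfy, for all t, b₁'(t) = θ'(t)·b₂(t) and b₂'(t) = θ'(t)·(a·κ̂(t)·ρ(t) − b₁(t)). -/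
open Real intervalIntegral

/-!
Expanding `cos (θ t - θ s)` and `sin (θ t - θ s)` pulls `θ t` out of the integrals, so
`Ic t = ∫₀ᵗ cos (θ t - θ s) g s` and `Is t = ∫₀ᵗ sin (θ t - θ s) g s` satisfy the rotation
system `Ic' = g - θ' Is`, `Is' = θ' Ic` (Duhamel's formula for `z' = -iθ' z + g`).
Since `(κ̂ ρ)' = g`, the term `-a Ic` cancels the inhomogeneity `a g` produced by `a κ̂ ρ`,
and the terms in `A / a` solve the homogeneous rotation system.
-/

section RotationIntegral

variable {θ g : ℝ → ℝ}

theorem integral_cos_sub_mul (hθ : Continuous θ) (hg : Continuous g) (t : ℝ) :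
    ∫ s in (0:ℝ)..t, cos (θ t - θ s) * g s
      = cos (θ t) * (∫ s in (0:ℝ)..t, cos (θ s) * g s)
        + sin (θ t) * ∫ s in (0:ℝ)..t, sin (θ s) * g s := by
  have hcos : Continuous fun s => cos (θ s) * g s := by fun_prop
  have hsin : Continuous fun s => sin (θ s) * g s := by fun_prop
  rw [← integral_const_mul, ← integral_const_mul, ← integral_add
    ((hcos.intervalIntegrable 0 t).const_mul _) ((hsin.intervalIntegrable 0 t).const_mul _)]
  refine integral_congr fun s _ => ?_
  simp only [cos_sub]
  ring

theorem integral_sin_sub_mul (hθ : Continuous θ) (hg : Continuous g) (t : ℝ) :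
    ∫ s in (0:ℝ)..t, sin (θ t - θ s) * g s
      = sin (θ t) * (∫ s in (0:ℝ)..t, cos (θ s) * g s)
        - cos (θ t) * ∫ s in (0:ℝ)..t, sin (θ s) * g s := by
  have hcos : Continuous fun s => cos (θ s) * g s := by fun_prop
  have hsin : Continuous fun s => sin (θ s) * g s := by fun_prop
  rw [← integral_const_mul, ← integral_const_mul, ← integral_sub
    ((hcos.intervalIntegrable 0 t).const_mul _) ((hsin.intervalIntegrable 0 t).const_mul _)]
  refine integral_congr fun s _ => ?_
  simp only [sin_sub]
  ring

theorem hasDerivAt_integral_cos_sub_mul (hθ : Differentiable ℝ θ) (hg : Continuous g) (t : ℝ) :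
    HasDerivAt (fun u => ∫ s in (0:ℝ)..u, cos (θ u - θ s) * g s)
      (g t - deriv θ t * ∫ s in (0:ℝ)..t, sin (θ t - θ s) * g s) t := by
  have hθc := hθ.continuous
  have hC := (by fun_prop : Continuous fun s => cos (θ s) * g s).integral_hasStrictDerivAt 0 t
  have hS := (by fun_prop : Continuous fun s => sin (θ s) * g s).integral_hasStrictDerivAt 0 t
  have hD := ((hθ t).hasDerivAt.cos.fun_mul hC.hasDerivAt).fun_add
    ((hθ t).hasDerivAt.sin.fun_mul hS.hasDerivAt)
  simp only [integral_cos_sub_mul hθc hg, integral_sin_sub_mul hθc hg]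
  refine hD.congr_deriv ?_
  linear_combination g t * sin_sq_add_cos_sq (θ t)

theorem hasDerivAt_integral_sin_sub_mul (hθ : Differentiable ℝ θ) (hg : Continuous g) (t : ℝ) :
    HasDerivAt (fun u => ∫ s in (0:ℝ)..u, sin (θ u - θ s) * g s)
      (deriv θ t * ∫ s in (0:ℝ)..t, cos (θ t - θ s) * g s) t := by
  have hθc := hθ.continuous
  have hC := (by fun_prop : Continuous fun s => cos (θ s) * g s).integral_hasStrictDerivAt 0 t
  have hS := (by fun_prop : Continuous fun s => sin (θ s) * g s).integral_hasStrictDerivAt 0 t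
  have hD := ((hθ t).hasDerivAt.sin.fun_mul hC.hasDerivAt).fun_sub
    ((hθ t).hasDerivAt.cos.fun_mul hS.hasDerivAt)
  simp only [integral_cos_sub_mul hθc hg, integral_sin_sub_mul hθc hg]
  refine hD.congr_deriv ?_
  ring

end RotationIntegral

theorem HasDerivAt.mul_inv_sub {f h : ℝ → ℝ} {f' h' t : ℝ} (hf : HasDerivAt f f' t)
    (hh : HasDerivAt h h' t) (hne : f t - h t ≠ 0) :
    HasDerivAt (fun u => h u * (f u - h u)⁻¹) ((f t - h t)⁻¹ ^ 2 * (f t * h' - f' * h t)) t := by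
  refine (hh.fun_mul ((hf.fun_sub hh).fun_inv hne)).congr_deriv ?_
  field_simp
  ring

theorem rolling_b_formulas_solve_system_general
    (κ κh θ : ℝ → ℝ)
    (hκ : ContDiff ℝ 1 κ) (hκh : ContDiff ℝ 1 κh)
    (hne : ∀ t, κ t - κh t ≠ 0)
    (a A φ₀ : ℝ)
    (hθ : ContDiff ℝ 1 θ)
    (ρ g b₁ b₂ : ℝ → ℝ)
    (hρ : ρ = fun t => (κ t - κh t)⁻¹)
    (hg : g = fun t => ρ t ^ 2 * (κ t * deriv κh t - deriv κ t * κh t))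
    (hb₁ : b₁ = fun t => a * κh t * ρ t + (A / a) * Real.cos (θ t - φ₀)
        - a * ∫ s in (0:ℝ)..t, Real.cos (θ t - θ s) * g s)
    (hb₂ : b₂ = fun t => -(A / a) * Real.sin (θ t - φ₀)
        + a * ∫ s in (0:ℝ)..t, Real.sin (θ t - θ s) * g s) :
    ∀ t : ℝ,
      HasDerivAt b₁ (deriv θ t * b₂ t) t
      ∧ HasDerivAt b₂ (deriv θ t * (a * κh t * ρ t - b₁ t)) t := by
  intro t
  subst hb₁ hb₂ hg hρ
  have hθd := hθ.differentiable one_ne_zero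
  have hgc : Continuous fun t => (κ t - κh t)⁻¹ ^ 2 * (κ t * deriv κh t - deriv κ t * κh t) :=
    (((hκ.continuous.sub hκh.continuous).inv₀ hne).pow 2).mul <|
      (hκ.continuous.mul (hκh.continuous_deriv le_rfl)).sub
        ((hκ.continuous_deriv le_rfl).mul hκh.continuous)
  have hκhρ := ((hκ.differentiable one_ne_zero t).hasDerivAt.mul_inv_sub
    (hκh.differentiable one_ne_zero t).hasDerivAt (hne t)).const_mul a
  simp only [← mul_assoc] at hκhρ
  have hIc := hasDerivAt_integral_cos_sub_mul hθd hgc t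
  have hIs := hasDerivAt_integral_sin_sub_mul hθd hgc t
  have hθφ := (hθd t).hasDerivAt.sub_const φ₀
  constructor
  · refine ((hκhρ.fun_add (hθφ.cos.const_mul (A / a))).fun_sub (hIc.const_mul a)).congr_deriv ?_
    ring
  · refine ((hθφ.sin.const_mul (-(A / a))).fun_add (hIs.const_mul a)).congr_deriv ?_
    ring

/-- The explicit integral formulas for `b₁`, `b₂` solve the linear system of ODEs
`b₁' = θ'·b₂`, `b₂' = θ'·(a·κ̂·ρ − b₁)` arising from the rolling problem of two
surfaces with Gaussian curvatures `κ` and `κ̂`. -/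
theorem rolling_b_formulas_solve_system
    (κ κh θ : ℝ → ℝ)
    (hκ : ContDiff ℝ 1 κ) (hκh : ContDiff ℝ 1 κh)
    (hne : ∀ t, κ t - κh t ≠ 0)
    (a A φ₀ : ℝ) (ha : a ≠ 0)
    (hθ : ContDiff ℝ 1 θ)
    (ρ g b₁ b₂ : ℝ → ℝ)
    (hρ : ρ = fun t => (κ t - κh t)⁻¹)
    (hg : g = fun t => ρ t ^ 2 * (κ t * deriv κh t - deriv κ t * κh t))
    (hb₁ : b₁ = fun t => a * κh t * ρ t + (A / a) * Real.cos (θ t - φ₀)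
        - a * ∫ s in (0:ℝ)..t, Real.cos (θ t - θ s) * g s)
    (hb₂ : b₂ = fun t => -(A / a) * Real.sin (θ t - φ₀)
        + a * ∫ s in (0:ℝ)..t, Real.sin (θ t - θ s) * g s) :
    ∀ t : ℝ,
      HasDerivAt b₁ (deriv θ t * b₂ t) t
      ∧ HasDerivAt b₂ (deriv θ t * (a * κh t * ρ t - b₁ t)) t :=
  rolling_b_formulas_solve_system_general κ κh θ hκ hκh hne a A φ₀ hθ ρ g b₁ b₂ hρ hg hb₁ hb₂
end

section
/- Let κ, κ̂ : ℝ → ℝ be continuously differentiable with κ(t) − κ̂(t) ≠ 0 for all t, set ρ(t) := 1/(κ(t) − κ̂(t)) and g(t) := ρ(t)²·(κ(t)·κ̂'(t) − κ'(t)·κ̂(t)). Let a ∈ ℝ with a ≠ 0 and let θ : ℝ → ℝ be continuously differentiable. Suppose b₁, b₂ : ℝ → ℝ are differentiable and satisfy b₁'(t) = θ'(t)·b₂(t) and b₂'(t) = θ'(t)·(a·κ̂(t)·ρ(t) − b₁(t)) for all t. Then there exist constants A, φ₀ ∈ ℝ such that for all t, b₁(t) = a·κ̂(t)·ρ(t)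 + (A/a)·cos(θ(t) − φ₀) − a·∫₀ᵗ cos(θ(t) − θ(s))·g(s) ds and b₂(t) = −(A/a)·sin(θ(t) − φ₀) + a·∫₀ᵗ sin(θ(t) − θ(s))·g(s) ds. -/
/-!
With `u = b₁ - aκ̂ρ` and `v = b₂`, the system reads `u' = θ'v - a g`, `v' = -θ'u`, since
`(κ̂ρ)' = g`. For `w = u + iv` this is the scalar equation `w' = -iθ'w - a g`, so
`(e^{iθ} w)' = -a g e^{iθ}` and `w(t) = e^{-iθ(t)} c - a ∫₀ᵗ e^{-i(θ(t) - θ(s))} g(s) ds`.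
Writing `c = |c| e^{iφ₀}` and taking real and imaginary parts gives the formulas, with `A = a|c|`.
-/

open Real intervalIntegral

open Complex in
theorem exists_eq_exp_mul_add_integral_of_hasDerivAt {θ θ' : ℝ → ℝ} {f w : ℝ → ℂ}
    (hθ : ∀ t, HasDerivAt θ (θ' t) t) (hf : Continuous f)
    (hw : ∀ t, HasDerivAt w (-(θ' t * I) * w t + f t) t) :
    ∃ c : ℂ, ∀ t,
      w t = exp (↑(-θ t) * I) * c + ∫ s in (0:ℝ)..t, exp (↑(-(θ t - θ s)) * I) * f s := by
  have hθc : Continuous θ := continuous_iff_continuousAt.2 fun t => (hθ t).continuousAt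
  refine ⟨exp (θ 0 * I) * w 0, fun t => ?_⟩
  have hprim : ∫ s in (0:ℝ)..t, exp (θ s * I) * f s
      = exp (θ t * I) * w t - exp (θ 0 * I) * w 0 :=
    integral_eq_sub_of_hasDerivAt
      (fun s _ => (((hθ s).ofReal_comp.mul_const I).cexp.mul (hw s)).congr_deriv (by ring))
      ((by fun_prop : Continuous fun s => exp (θ s * I) * f s).intervalIntegrable _ _)
  have hsplit s :
      exp (↑(-(θ t - θ s)) * I) * f s = exp (↑(-θ t) * I) * (exp (θ s * I) * f s) := by
    rw [← mul_assoc, ← Complex.exp_add]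
    push_cast
    ring_nf
  have hinv : exp (↑(-θ t) * I) * exp (θ t * I) = 1 := by
    rw [← Complex.exp_add]
    push_cast
    simp
  simp only [hsplit, integral_const_mul, hprim]
  linear_combination -(w t) * hinv

theorem re_intervalIntegral_exp_ofReal_mul_I_mul_ofReal {ψ q : ℝ → ℝ} {a b : ℝ}
    (h : IntervalIntegrable (fun s => Complex.exp (ψ s * Complex.I) * q s)
      MeasureTheory.volume a b) :
    (∫ s in a..b, Complex.exp (ψ s * Complex.I) * q s).re = ∫ s in a..b, cos (ψ s) * q s := by
  rw [← RCLike.re_to_complex, ← intervalIntegral_re h]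
  simp only [RCLike.re_to_complex, Complex.mul_re, Complex.exp_ofReal_mul_I_re,
    Complex.exp_ofReal_mul_I_im, Complex.ofReal_re, Complex.ofReal_im, mul_zero, sub_zero]

theorem im_intervalIntegral_exp_ofReal_mul_I_mul_ofReal {ψ q : ℝ → ℝ} {a b : ℝ}
    (h : IntervalIntegrable (fun s => Complex.exp (ψ s * Complex.I) * q s)
      MeasureTheory.volume a b) :
    (∫ s in a..b, Complex.exp (ψ s * Complex.I) * q s).im = ∫ s in a..b, sin (ψ s) * q s := by
  rw [← RCLike.im_to_complex, ← intervalIntegral_im h]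
  simp only [RCLike.im_to_complex, Complex.mul_im, Complex.exp_ofReal_mul_I_re,
    Complex.exp_ofReal_mul_I_im, Complex.ofReal_re, Complex.ofReal_im, mul_zero, zero_add]

theorem exists_cos_sin_formula_of_hasDerivAt {θ θ' p u v : ℝ → ℝ}
    (hθ : ∀ t, HasDerivAt θ (θ' t) t) (hp : Continuous p)
    (hu : ∀ t, HasDerivAt u (θ' t * v t - p t) t)
    (hv : ∀ t, HasDerivAt v (-(θ' t * u t)) t) :
    ∃ R φ₀ : ℝ, ∀ t,
      u t = R * cos (θ t - φ₀) - ∫ s in (0:ℝ)..t, cos (θ t - θ s) * p s ∧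
      v t = -R * sin (θ t - φ₀) + ∫ s in (0:ℝ)..t, sin (θ t - θ s) * p s := by
  have hθc : Continuous θ := continuous_iff_continuousAt.2 fun t => (hθ t).continuousAt
  obtain ⟨c, hc⟩ := exists_eq_exp_mul_add_integral_of_hasDerivAt
    (w := fun t => u t + v t * Complex.I) (f := fun t => ((-p t : ℝ) : ℂ)) hθ (by fun_prop)
    fun t => ((hu t).ofReal_comp.add ((hv t).ofReal_comp.mul_const Complex.I)).congr_deriv (by
      push_cast
      linear_combination (θ' t * v t : ℂ) * Complex.I_sq)
  refine ⟨‖c‖, Complex.arg c, fun t => ?_⟩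
  have hpolar : Complex.exp (↑(-θ t) * Complex.I) * c
      = ‖c‖ * Complex.exp (↑(-(θ t - Complex.arg c)) * Complex.I) := by
    conv_lhs => rw [← Complex.norm_mul_exp_arg_mul_I c]
    rw [mul_left_comm, ← Complex.exp_add]
    push_cast
    ring_nf
  have hint : IntervalIntegrable
      (fun s => Complex.exp (↑(-(θ t - θ s)) * Complex.I) * ((-p s : ℝ) : ℂ))
      MeasureTheory.volume 0 t :=
    (by fun_prop : Continuous _).intervalIntegrable _ _
  have hw := hc t
  rw [hpolar] at hw
  constructor
  · have hre := congrArg Complex.re hw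
    simp only [Complex.add_re, Complex.ofReal_re, Complex.mul_re,
      Complex.I_re, Complex.I_im, Complex.ofReal_im, Complex.exp_ofReal_mul_I_re,
      re_intervalIntegral_exp_ofReal_mul_I_mul_ofReal hint, cos_neg, mul_neg, integral_neg] at hre
    linarith
  · have him := congrArg Complex.im hw
    simp only [Complex.add_im, Complex.ofReal_im, Complex.mul_im,
      Complex.I_re, Complex.I_im, Complex.ofReal_re, Complex.exp_ofReal_mul_I_im,
      im_intervalIntegral_exp_ofReal_mul_I_mul_ofReal hint, sin_neg, neg_mul, mul_neg,
      neg_neg] at him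
    linarith

theorem HasDerivAt.mul_inv_sub_s4 {κ κh : ℝ → ℝ} {κ' κh' t : ℝ} (hκ : HasDerivAt κ κ' t)
    (hκh : HasDerivAt κh κh' t) (hne : κ t - κh t ≠ 0) :
    HasDerivAt (fun x => κh x * (κ x - κh x)⁻¹)
      ((κ t - κh t)⁻¹ ^ 2 * (κ t * κh' - κ' * κh t)) t :=
  (hκh.mul ((hκ.sub hκh).inv hne)).congr_deriv (by
    simp only [Pi.inv_apply, Pi.sub_apply]
    field_simp
    ring)

/-- Every solution of the linear system `b₁' = θ'·b₂`, `b₂' = θ'·(a·κ̂·ρ − b₁)`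
arising from the rolling problem of two surfaces is given by the explicit
integral formulas, for suitable constants `A`, `φ₀`. -/
theorem rolling_b_system_general_solution
    (κ κh θ : ℝ → ℝ)
    (hκ : ContDiff ℝ 1 κ) (hκh : ContDiff ℝ 1 κh)
    (hne : ∀ t, κ t - κh t ≠ 0)
    (a : ℝ) (ha : a ≠ 0)
    (hθ : ContDiff ℝ 1 θ)
    (ρ g b₁ b₂ : ℝ → ℝ)
    (hρ : ρ = fun t => (κ t - κh t)⁻¹)
    (hg : g = fun t => ρ t ^ 2 * (κ t * deriv κh t - deriv κ t * κh t))
    (hb₁ : Differentiable ℝ b₁) (hb₂ : Differentiable ℝ b₂)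
    (hode₁ : ∀ t, deriv b₁ t = deriv θ t * b₂ t)
    (hode₂ : ∀ t, deriv b₂ t = deriv θ t * (a * κh t * ρ t - b₁ t)) :
    ∃ A φ₀ : ℝ, ∀ t : ℝ,
      b₁ t = a * κh t * ρ t + (A / a) * Real.cos (θ t - φ₀)
          - a * ∫ s in (0:ℝ)..t, Real.cos (θ t - θ s) * g s
      ∧ b₂ t = -(A / a) * Real.sin (θ t - φ₀)
          + a * ∫ s in (0:ℝ)..t, Real.sin (θ t - θ s) * g s := by
  have hforcing t : HasDerivAt (fun x => a * κh x * ρ x) (a * g t) t := by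
    subst hρ hg
    simpa only [mul_assoc] using
      (((hκ.differentiable one_ne_zero t).hasDerivAt.mul_inv_sub_s4
        (hκh.differentiable one_ne_zero t).hasDerivAt (hne t)).const_mul a)
  have hgc : Continuous g := by
    subst hρ hg
    exact (((hκ.continuous.sub hκh.continuous).inv₀ hne).pow 2).mul
      ((hκ.continuous.mul (hκh.continuous_deriv le_rfl)).sub
        ((hκ.continuous_deriv le_rfl).mul hκh.continuous))
  obtain ⟨R, φ₀, hsol⟩ := exists_cos_sin_formula_of_hasDerivAt
    (u := fun t => b₁ t - a * κh t * ρ t) (p := fun t => a * g t)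
    (fun t => (hθ.differentiable one_ne_zero t).hasDerivAt) (continuous_const.mul hgc)
    (fun t => ((hb₁ t).hasDerivAt.sub (hforcing t)).congr_deriv (by rw [hode₁]))
    (fun t => (hb₂ t).hasDerivAt.congr_deriv (by rw [hode₂]; ring))
  refine ⟨a * R, φ₀, fun t => ?_⟩
  obtain ⟨h₁, h₂⟩ := hsol t
  simp only [mul_left_comm _ a, integral_const_mul] at h₁ h₂
  rw [mul_div_cancel_left₀ R ha]
  constructor <;> linarith
end

section
/- Let κ, κ̂ : ℝ → ℝ be continuously differentiable with κ(t) − κ̂(t) ≠ 0 for all t, and set ρ(t) := 1/(κ(t) − κ̂(t)). Let a ∈ ℝ with a ≠ 0 and let θ : ℝ → ℝ be twice continuously differentiable. Then the following are equivalent: (i) there exist continuously differentiable functions L, b₁, b₂ : ℝ → ℝ satisfying, for all t, θ'(t) = L(t)·(κ(t) − κ̂(t)), L'(t) = a·b₂(t), b₁'(t) = θ'(t)·b₂(t), and b₂'(t) = a·L(t)·κ̂(t) − θ'(t)·b₁(t); (ii) there exist constants A, φ₀ ∈ ℝ such that for all t, θ''(t) + (ρ'(t)/ρ(t))·θ'(t)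 = (A/ρ(t))·sin(θ(t) − φ₀) + (a²/ρ(t))·F(t), where F(t) := ∫₀ᵗ ρ(s)²·sin(θ(t) − θ(s))·(κ(s)·κ̂'(s) − κ'(s)·κ̂(s)) ds. -/
open Real intervalIntegral

/-!
With `L = ρ θ'` the first equation is solved, and the system says that `(ρ θ')' = a b₂` while
`(b₁, b₂)` rotates with angular velocity `θ'` under the source `a (κ̂ ρ)'`. For
`g = ρ² (κ κ̂' - κ' κ̂) = (κ̂ ρ)'` let `F t = ∫₀ᵗ g s sin (θ t - θ s) ds` and `F̃` its cosine
analogue; then `F' = θ' F̃` and `F̃' = g - θ' F`, so `(b₁ - a κ̂ ρ + a F̃, b₂ - a F)` solves the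
source-free rotation system, whose solutions are `(-R cos (θ - φ₀), R sin (θ - φ₀))`. Hence
`(ρ θ')' = a R sin (θ - φ₀) + a² F`, which is the pendulum equation with `A = a R` because
`(ρ θ')' = ρ (θ'' + (ρ'/ρ) θ')`; read backwards, the same formulas define `b₁` and `b₂`.
-/

theorem exists_mul_cos_add_mul_sin_eq_mul_sin_sub (p q : ℝ) :
    ∃ R φ : ℝ, ∀ x, p * cos x + q * sin x = R * sin (x - φ) := by
  let z : ℂ := ⟨q, -p⟩
  refine ⟨‖z‖, Complex.arg z, fun x => ?_⟩
  have hcos : ‖z‖ * cos (Complex.arg z) = q := Complex.norm_mul_cos_arg z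
  have hsin : ‖z‖ * sin (Complex.arg z) = -p := Complex.norm_mul_sin_arg z
  rw [sin_sub]
  linear_combination -sin x * hcos + cos x * hsin

theorem exists_eq_mul_sin_sub_of_hasDerivAt_rotation {θ ω c₁ c₂ : ℝ → ℝ}
    (hθ : ∀ t, HasDerivAt θ (ω t) t) (hc₁ : ∀ t, HasDerivAt c₁ (ω t * c₂ t) t)
    (hc₂ : ∀ t, HasDerivAt c₂ (-(ω t * c₁ t)) t) :
    ∃ R φ : ℝ, ∀ t, c₂ t = R * sin (θ t - φ) := by
  -- `(c₂ + i c₁) e^{-iθ}` is constant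
  let x := fun t => c₁ t * sin (θ t) + c₂ t * cos (θ t)
  let y := fun t => c₁ t * cos (θ t) - c₂ t * sin (θ t)
  have hx : ∀ t, HasDerivAt x 0 t := fun t =>
    (((hc₁ t).mul (hθ t).sin).add ((hc₂ t).mul (hθ t).cos)).congr_deriv (by ring)
  have hy : ∀ t, HasDerivAt y 0 t := fun t =>
    (((hc₁ t).mul (hθ t).cos).sub ((hc₂ t).mul (hθ t).sin)).congr_deriv (by ring)
  have hconst : ∀ {f : ℝ → ℝ}, (∀ t, HasDerivAt f 0 t) → ∀ t, f t = f 0 := fun hf t =>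
    is_const_of_deriv_eq_zero (fun s => (hf s).differentiableAt) (fun s => (hf s).deriv) t 0
  obtain ⟨R, φ, hRφ⟩ := exists_mul_cos_add_mul_sin_eq_mul_sin_sub (x 0) (-y 0)
  refine ⟨R, φ, fun t => ?_⟩
  rw [← hRφ, ← hconst hx t, ← hconst hy t]
  linear_combination -c₂ t * sin_sq_add_cos_sq (θ t)

section Forcing

variable {θ g : ℝ → ℝ}

noncomputable def sinForcing (θ g : ℝ → ℝ) (t : ℝ) : ℝ :=
  ∫ s in (0:ℝ)..t, g s * sin (θ t - θ s)

noncomputable def cosForcing (θ g : ℝ → ℝ) (t : ℝ) : ℝ :=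
  ∫ s in (0:ℝ)..t, g s * cos (θ t - θ s)

theorem sinForcing_eq (hθ : Continuous θ) (hg : Continuous g) (t : ℝ) : sinForcing θ g t =
    sin (θ t) * (∫ s in (0:ℝ)..t, g s * cos (θ s)) -
      cos (θ t) * ∫ s in (0:ℝ)..t, g s * sin (θ s) := by
  simp only [sinForcing, sin_sub, mul_sub, ← integral_const_mul]
  rw [← integral_sub]
  · congr 1; ext s; ring
  all_goals exact Continuous.intervalIntegrable (by fun_prop) _ _

theorem cosForcing_eq (hθ : Continuous θ) (hg : Continuous g) (t : ℝ) : cosForcing θ g t =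
    cos (θ t) * (∫ s in (0:ℝ)..t, g s * cos (θ s)) +
      sin (θ t) * ∫ s in (0:ℝ)..t, g s * sin (θ s) := by
  simp only [cosForcing, cos_sub, mul_add, ← integral_const_mul]
  rw [← integral_add]
  · congr 1; ext s; ring
  all_goals exact Continuous.intervalIntegrable (by fun_prop) _ _

theorem hasDerivAt_sinForcing {ω : ℝ → ℝ} (hθ : ∀ t, HasDerivAt θ (ω t) t) (hg : Continuous g)
    (t : ℝ) :
    HasDerivAt (sinForcing θ g) (ω t * cosForcing θ g t) t := by
  have hθc : Continuous θ := continuous_iff_continuousAt.2 fun t => (hθ t).continuousAt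
  have hP := ((show Continuous fun s => g s * cos (θ s) by fun_prop)
    |>.integral_hasStrictDerivAt 0 t).hasDerivAt
  have hQ := ((show Continuous fun s => g s * sin (θ s) by fun_prop)
    |>.integral_hasStrictDerivAt 0 t).hasDerivAt
  rw [funext (sinForcing_eq hθc hg), cosForcing_eq hθc hg]
  exact (((hθ t).sin.mul hP).sub ((hθ t).cos.mul hQ)).congr_deriv (by ring)

theorem hasDerivAt_cosForcing {ω : ℝ → ℝ} (hθ : ∀ t, HasDerivAt θ (ω t) t) (hg : Continuous g)
    (t : ℝ) :
    HasDerivAt (cosForcing θ g) (g t - ω t * sinForcing θ g t) t := by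
  have hθc : Continuous θ := continuous_iff_continuousAt.2 fun t => (hθ t).continuousAt
  have hP := ((show Continuous fun s => g s * cos (θ s) by fun_prop)
    |>.integral_hasStrictDerivAt 0 t).hasDerivAt
  have hQ := ((show Continuous fun s => g s * sin (θ s) by fun_prop)
    |>.integral_hasStrictDerivAt 0 t).hasDerivAt
  rw [funext (cosForcing_eq hθc hg), sinForcing_eq hθc hg]
  refine (((hθ t).cos.mul hP).add ((hθ t).sin.mul hQ)).congr_deriv ?_
  linear_combination g t * sin_sq_add_cos_sq (θ t)

end Forcing

theorem contDiff_one_of_hasDerivAt {f f' : ℝ → ℝ} (hf : ∀ t, HasDerivAt f (f' t) t)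
    (hf' : Continuous f') : ContDiff ℝ 1 f :=
  contDiff_one_iff_deriv.2 ⟨fun t => (hf t).differentiableAt, by rwa [funext fun t => (hf t).deriv]⟩

theorem hasDerivAt_mul_inv_sub {κ κh : ℝ → ℝ} {κ' κh' t : ℝ} (hκ : HasDerivAt κ κ' t)
    (hκh : HasDerivAt κh κh' t) (hne : κ t - κh t ≠ 0) :
    HasDerivAt (fun s => κh s * (κ s - κh s)⁻¹)
      ((κ t - κh t)⁻¹ ^ 2 * (κ t * κh' - κ' * κh t)) t := by
  have hinv : HasDerivAt (fun s => (κ s - κh s)⁻¹) (-(κ' - κh') / (κ t - κh t) ^ 2) t :=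
    (hκ.sub hκh).inv hne
  refine (hκh.mul hinv).congr_deriv ?_
  field_simp
  ring

theorem pendulum_iff_deriv_mul_deriv_eq {ρ θ : ℝ → ℝ} {t A B x y : ℝ}
    (hρ : Differentiable ℝ ρ) (hθ : Differentiable ℝ (deriv θ)) (hρ0 : ∀ t, ρ t ≠ 0) :
    deriv (deriv θ) t + deriv ρ t / ρ t * deriv θ t = A / ρ t * x + B / ρ t * y ↔
      deriv (fun s => ρ s * deriv θ s) t = A * x + B * y := by
  have := hρ0 t
  rw [deriv_fun_mul (hρ t) (hθ t)]
  field_simp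
  constructor <;> intro h <;> linarith

section GeodesicSystem

variable {θ ρ κh g b₂ : ℝ → ℝ} {a : ℝ}

theorem exists_geodesic_system_iff (hθ : Differentiable ℝ θ) (hg : Continuous g)
    (hG : ∀ t, HasDerivAt (fun s => κh s * ρ s) (g t) t) :
    (∃ b₁ : ℝ → ℝ, ∀ t, HasDerivAt b₁ (deriv θ t * b₂ t) t ∧
        HasDerivAt b₂ (a * (ρ t * deriv θ t) * κh t - deriv θ t * b₁ t) t) ↔
      ∃ R φ : ℝ, ∀ t, b₂ t = R * sin (θ t - φ) + a * sinForcing θ g t := by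
  have hθ' : ∀ t, HasDerivAt θ (deriv θ t) t := fun t => (hθ t).hasDerivAt
  have hF := hasDerivAt_sinForcing hθ' hg
  have hF' := hasDerivAt_cosForcing hθ' hg
  constructor
  · rintro ⟨b₁, hb⟩
    -- shifting by the forcing terms turns the system into a pure rotation
    obtain ⟨R, φ, h⟩ := exists_eq_mul_sin_sub_of_hasDerivAt_rotation hθ'
      (c₁ := fun t => b₁ t - a * (κh t * ρ t) + a * cosForcing θ g t)
      (c₂ := fun t => b₂ t - a * sinForcing θ g t)
      (fun t => (((hb t).1.sub ((hG t).const_mul a)).add ((hF' t).const_mul a)).congr_deriv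
        (by ring))
      (fun t => ((hb t).2.sub ((hF t).const_mul a)).congr_deriv (by ring))
    exact ⟨R, φ, fun t => by linarith [h t]⟩
  · rintro ⟨R, φ, h⟩
    obtain rfl : b₂ = fun t => R * sin (θ t - φ) + a * sinForcing θ g t := funext h
    refine ⟨fun t => a * (κh t * ρ t) - a * cosForcing θ g t - R * cos (θ t - φ), fun t => ?_⟩
    have hθφ := (hθ' t).sub_const φ
    exact ⟨((((hG t).const_mul a).sub ((hF' t).const_mul a)).sub (hθφ.cos.const_mul R)).congr_deriv
        (by ring), ((hθφ.sin.const_mul R).add ((hF t).const_mul a)).congr_deriv (by ring)⟩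

theorem contDiff_of_geodesic_system {b₁ : ℝ → ℝ} (hθ : Continuous (deriv θ)) (hρ : Continuous ρ)
    (hκh : Continuous κh) (hb : ∀ t, HasDerivAt b₁ (deriv θ t * b₂ t) t ∧
      HasDerivAt b₂ (a * (ρ t * deriv θ t) * κh t - deriv θ t * b₁ t) t) :
    ContDiff ℝ 1 b₁ ∧ ContDiff ℝ 1 b₂ := by
  have hb₁ : Continuous b₁ := continuous_iff_continuousAt.2 fun t => (hb t).1.continuousAt
  have hb₂ : Continuous b₂ := continuous_iff_continuousAt.2 fun t => (hb t).2.continuousAt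
  exact ⟨contDiff_one_of_hasDerivAt (fun t => (hb t).1) (by fun_prop),
    contDiff_one_of_hasDerivAt (fun t => (hb t).2) (by fun_prop)⟩

end GeodesicSystem

/-- For two surfaces with Gaussian curvatures `κ`, `κ̂` rolling on each other
without twisting or slipping, the first-order normal geodesic system for the
direction angle `θ` is equivalent to a pendulum equation whose length varies as
`ρ(t) = 1/(κ(t) − κ̂(t))`, with an extra forcing term `(a²/ρ)·F(t)`. -/
theorem rolling_surfaces_geodesic_iff_pendulum
    (κ κh θ : ℝ → ℝ)
    (hκ : ContDiff ℝ 1 κ) (hκh : ContDiff ℝ 1 κh)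
    (hne : ∀ t, κ t - κh t ≠ 0)
    (a : ℝ) (ha : a ≠ 0)
    (hθ : ContDiff ℝ 2 θ)
    (ρ : ℝ → ℝ) (hρ : ρ = fun t => (κ t - κh t)⁻¹) :
    (∃ L b₁ b₂ : ℝ → ℝ,
        ContDiff ℝ 1 L ∧ ContDiff ℝ 1 b₁ ∧ ContDiff ℝ 1 b₂ ∧
        ∀ t : ℝ,
          deriv θ t = L t * (κ t - κh t)
          ∧ deriv L t = a * b₂ t
          ∧ deriv b₁ t = deriv θ t * b₂ t
          ∧ deriv b₂ t = a * L t * κh t - deriv θ t * b₁ t)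
    ↔ (∃ A φ₀ : ℝ, ∀ t : ℝ,
        deriv (deriv θ) t + (deriv ρ t / ρ t) * deriv θ t
          = (A / ρ t) * Real.sin (θ t - φ₀)
            + (a ^ 2 / ρ t) *
              ∫ s in (0:ℝ)..t,
                ρ s ^ 2 * Real.sin (θ t - θ s)
                  * (κ s * deriv κh s - deriv κ s * κh s)) := by
  have hρ0 : ∀ t, ρ t ≠ 0 := fun t => hρ ▸ inv_ne_zero (hne t)
  have hρC : ContDiff ℝ 1 ρ := hρ ▸ (hκ.sub hκh).inv hne
  have hθ' : ContDiff ℝ 1 (deriv θ) := hθ.deriv'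
  set g := fun s => ρ s ^ 2 * (κ s * deriv κh s - deriv κ s * κh s)
  have hg : Continuous g := by
    have := hκ.continuous_deriv le_rfl
    have := hκh.continuous_deriv le_rfl
    fun_prop
  have hG : ∀ t, HasDerivAt (fun s => κh s * ρ s) (g t) t := by
    subst hρ
    exact fun t => hasDerivAt_mul_inv_sub (hκ.differentiable one_ne_zero t).hasDerivAt
      (hκh.differentiable one_ne_zero t).hasDerivAt (hne t)
  have hF : ∀ t, (∫ s in (0:ℝ)..t,
      ρ s ^ 2 * sin (θ t - θ s) * (κ s * deriv κh s - deriv κ s * κh s)) = sinForcing θ g t :=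
    fun t => integral_congr fun s _ => by simp only [g]; ring
  simp only [hF, pendulum_iff_deriv_mul_deriv_eq (hρC.differentiable one_ne_zero)
    (hθ'.differentiable one_ne_zero) hρ0]
  have hsystem := fun b₂ => exists_geodesic_system_iff (b₂ := b₂) (a := a)
    (hθ.differentiable two_ne_zero) hg hG
  constructor
  · rintro ⟨L, b₁, b₂, -, hb₁, hb₂, h⟩
    obtain rfl : L = fun t => ρ t * deriv θ t := funext fun t => by
      rw [(h t).1, hρ]; field_simp [hne t]
    obtain ⟨R, φ, hR⟩ := (hsystem b₂).1 ⟨b₁, fun t =>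
      ⟨(h t).2.2.1 ▸ (hb₁.differentiable one_ne_zero t).hasDerivAt,
        (h t).2.2.2 ▸ (hb₂.differentiable one_ne_zero t).hasDerivAt⟩⟩
    exact ⟨a * R, φ, fun t => by rw [(h t).2.1, hR t]; ring⟩
  · rintro ⟨A, φ, h⟩
    obtain ⟨b₁, hb⟩ := (hsystem fun t => A / a * sin (θ t - φ) + a * sinForcing θ g t).2
      ⟨A / a, φ, fun t => rfl⟩
    obtain ⟨hb₁, hb₂⟩ :=
      contDiff_of_geodesic_system hθ'.continuous hρC.continuous hκh.continuous hb
    refine ⟨_, b₁, _, hρC.mul hθ', hb₁, hb₂, fun t => ⟨?_, ?_, (hb t).1.deriv, (hb t).2.deriv⟩⟩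
    · rw [hρ]; field_simp [hne t]
    · rw [h t]; field_simp
end

section
/- Let κ, κ̂ ∈ ℝ be constants with κ ≠ κ̂, let a ∈ ℝ with a ≠ 0, and let θ : ℝ → ℝ be twice continuously differentiable. If there exist continuously differentiable functions L, b₁, b₂ : ℝ → ℝ satisfying, for all t, θ'(t) = L(t)·(κ − κ̂), L'(t) = a·b₂(t), b₁'(t) = θ'(t)·b₂(t), and b₂'(t) = a·L(t)·κ̂ − θ'(t)·b₁(t), then there exist constants A, φ₀ ∈ ℝ such that θ''(t) = A·(κ − κ̂)·sin(θ(t) − φ₀) for all t; that is, θ solves the classical pendulum equation with pendulum length ρ = 1/(κ − κ̂). -/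
/-!
Put `c = a κ̂ / (κ − κ̂)`. Since `L = θ' / (κ − κ̂)`, the system says that the plane vector
`(b₁ − c, b₂)` turns with angular velocity `−θ'`, so rotating it back by `θ` gives a constant
vector. Hence `b₂ = q cos θ − p sin θ = A sin (θ − φ₀)` for constants, and
`θ'' = (κ − κ̂) L' = a (κ − κ̂) b₂` is the pendulum equation.
-/

open Real

lemma exists_mul_cos_eq_and_mul_sin_eq (x y : ℝ) :
    ∃ r φ : ℝ, r * cos φ = x ∧ r * sin φ = y := by
  refine ⟨‖(⟨x, y⟩ : ℂ)‖, Complex.arg ⟨x, y⟩, ?_, ?_⟩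
  · simp [Complex.norm_mul_cos_arg]
  · simp [Complex.norm_mul_sin_arg]

section Rotation

variable {u v θ ω : ℝ → ℝ}
  (hθ : ∀ t, HasDerivAt θ (ω t) t)
  (hu : ∀ t, HasDerivAt u (ω t * v t) t)
  (hv : ∀ t, HasDerivAt v (-(ω t * u t)) t)
include hθ hu hv

lemma hasDerivAt_rotate_fst_eq_zero (t : ℝ) :
    HasDerivAt (fun s => u s * cos (θ s) - v s * sin (θ s)) 0 t := by
  refine (((hu t).mul (hθ t).cos).sub ((hv t).mul (hθ t).sin)).congr_deriv ?_
  ring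

lemma hasDerivAt_rotate_snd_eq_zero (t : ℝ) :
    HasDerivAt (fun s => u s * sin (θ s) + v s * cos (θ s)) 0 t := by
  refine (((hu t).mul (hθ t).sin).add ((hv t).mul (hθ t).cos)).congr_deriv ?_
  ring

theorem exists_eq_mul_sin_sub_of_hasDerivAt_rotation_s7 :
    ∃ A φ : ℝ, ∀ t, v t = A * sin (θ t - φ) := by
  set p := u 0 * cos (θ 0) - v 0 * sin (θ 0)
  set q := u 0 * sin (θ 0) + v 0 * cos (θ 0)
  have hp : ∀ t, u t * cos (θ t) - v t * sin (θ t) = p := fun t =>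
    is_const_of_deriv_eq_zero
      (fun s => (hasDerivAt_rotate_fst_eq_zero hθ hu hv s).differentiableAt)
      (fun s => (hasDerivAt_rotate_fst_eq_zero hθ hu hv s).deriv) t 0
  have hq : ∀ t, u t * sin (θ t) + v t * cos (θ t) = q := fun t =>
    is_const_of_deriv_eq_zero
      (fun s => (hasDerivAt_rotate_snd_eq_zero hθ hu hv s).differentiableAt)
      (fun s => (hasDerivAt_rotate_snd_eq_zero hθ hu hv s).deriv) t 0
  obtain ⟨A, φ, hAcos, hAsin⟩ := exists_mul_cos_eq_and_mul_sin_eq (-p) (-q)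
  refine ⟨A, φ, fun t => ?_⟩
  rw [sin_sub]
  linear_combination (-v t) * sin_sq_add_cos_sq (θ t) - sin (θ t) * hp t + cos (θ t) * hq t
    - sin (θ t) * hAcos + cos (θ t) * hAsin

end Rotation

theorem rolling_constant_curvature_pendulum_general
    (κ κh : ℝ) (hne : κ ≠ κh)
    (a : ℝ)
    (θ : ℝ → ℝ) (hθ : ContDiff ℝ 2 θ)
    (L b₁ b₂ : ℝ → ℝ)
    (hL : ContDiff ℝ 1 L) (hb₁ : ContDiff ℝ 1 b₁) (hb₂ : ContDiff ℝ 1 b₂)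
    (hsys : ∀ t : ℝ,
      deriv θ t = L t * (κ - κh)
      ∧ deriv L t = a * b₂ t
      ∧ deriv b₁ t = deriv θ t * b₂ t
      ∧ deriv b₂ t = a * L t * κh - deriv θ t * b₁ t) :
    ∃ A φ₀ : ℝ, ∀ t : ℝ,
      deriv (deriv θ) t = A * (κ - κh) * Real.sin (θ t - φ₀) := by
  have hκ : κ - κh ≠ 0 := sub_ne_zero.mpr hne
  have hθ' : ∀ t, HasDerivAt θ (deriv θ t) t :=
    fun t => (hθ.differentiable (by norm_num) t).hasDerivAt
  have hb₁' : ∀ t, HasDerivAt (fun s => b₁ s - a * κh / (κ - κh)) (deriv θ t * b₂ t) t :=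
    fun t => (hsys t).2.2.1 ▸ (hb₁.differentiable one_ne_zero t).hasDerivAt.sub_const _
  have hb₂' : ∀ t, HasDerivAt b₂ (-(deriv θ t * (b₁ t - a * κh / (κ - κh)))) t := by
    intro t
    refine (hb₂.differentiable one_ne_zero t).hasDerivAt.congr_deriv ?_
    rw [(hsys t).2.2.2, (hsys t).1]
    field_simp
    ring
  obtain ⟨A, φ₀, hb₂_eq⟩ := exists_eq_mul_sin_sub_of_hasDerivAt_rotation_s7 hθ' hb₁' hb₂'
  have hθ'' : ∀ t, deriv (deriv θ) t = a * b₂ t * (κ - κh) := fun t => by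
    rw [funext fun s => (hsys s).1,
      ((hL.differentiable one_ne_zero t).hasDerivAt.mul_const _).deriv, (hsys t).2.1]
  exact ⟨a * A, φ₀, fun t => by rw [hθ'', hb₂_eq]; ring⟩

/-- For two surfaces of constant Gaussian curvatures `κ ≠ κ̂` rolling on each
other without twisting or slipping, the direction angle `θ` of a normal
geodesic satisfies the classical pendulum equation with pendulum length
`ρ = 1/(κ − κ̂)`. -/
theorem rolling_constant_curvature_pendulum
    (κ κh : ℝ) (hne : κ ≠ κh)
    (a : ℝ) (ha : a ≠ 0)
    (θ : ℝ → ℝ) (hθ : ContDiff ℝ 2 θ)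
    (L b₁ b₂ : ℝ → ℝ)
    (hL : ContDiff ℝ 1 L) (hb₁ : ContDiff ℝ 1 b₁) (hb₂ : ContDiff ℝ 1 b₂)
    (hsys : ∀ t : ℝ,
      deriv θ t = L t * (κ - κh)
      ∧ deriv L t = a * b₂ t
      ∧ deriv b₁ t = deriv θ t * b₂ t
      ∧ deriv b₂ t = a * L t * κh - deriv θ t * b₁ t) :
    ∃ A φ₀ : ℝ, ∀ t : ℝ,
      deriv (deriv θ) t = A * (κ - κh) * Real.sin (θ t - φ₀) :=
  rolling_constant_curvature_pendulum_general κ κh hne a θ hθ L b₁ b₂ hL hb₁ hb₂ hsys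
end
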